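/- arXiv:2208.07808 — 2 statements merged into one kernel-verified Lean document; each statement's English description precedes it below -/
import Mathlib

section
/- Let (A, E, s) be an extriangulated category. Then the following are equivalent: (i) the underlying additive category A is weakly idempotent complete (every retraction admits a kernel); (ii) every retraction in A is a deflation of (A, E, s); (iii) every section in A is an inflation of (A, E, s); (iv) (A, E, s) satisfies the condition (WIC): for all composable morphisms f, g in A, if gf is an inflation then f is an inflation, and if gf is a deflation then g is a deflation. -/
/-!
Common axiomatic framework: extriangulated categories in the sense of Nakaoka–Palu,
formalised as a biadditive functor `E` together with a realisation predicate
`IsExtriangle` subject to the axioms (ET1)–(ET4), (ET3)ᵒᵖ, (ET4)ᵒᵖ.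
-/

open CategoryTheory CategoryTheory.Limits ZeroObject

attribute [local instance] CategoryTheory.Limits.hasBinaryBiproducts_of_finite_biproducts

universe v u

namespace ExtriPaper

/-- The data underlying an extriangulated category: a biadditive functor `E` and,
for each extension `δ ∈ E(X, A)`, the predicate picking out the pairs of composable
morphisms `A ⟶ B ⟶ X` belonging to the equivalence class `s(δ)`. -/
structure PreExt (C : Type u) [Category.{v} C] [Preadditive C] where
  E : Cᵒᵖ ⥤ C ⥤ AddCommGrpCat.{v}
  IsExtriangle : ∀ {A B X : C}, (A ⟶ B) → (B ⟶ X) → ↥((E.obj (Opposite.op X)).obj A) → Prop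

namespace PreExt

variable {C : Type u} [Category.{v} C] [Preadditive C]
variable (S : PreExt C)

/-- The group `E(X, A)` of extensions of `X` by `A`. -/
abbrev Ext (X A : C) : Type v := ↥((S.E.obj (Opposite.op X)).obj A)

/-- Pushforward `a_* δ` of an extension along `a : A ⟶ A'`. -/
def push {X A A' : C} (a : A ⟶ A') (δ : S.Ext X A) : S.Ext X A' :=
  (S.E.obj (Opposite.op X)).map a δ

/-- Pullback `c^* δ` of an extension along `c : X' ⟶ X`. -/
def pull {X' X A : C} (c : X' ⟶ X) (δ : S.Ext X A) : S.Ext X' A :=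
  (S.E.map c.op).app A δ

section Axioms

variable [HasZeroObject C] [HasFiniteBiproducts C]

/-- The direct sum `δ ⊕ δ'` of two extensions. -/
noncomputable def sumExt {X X' A A' : C} (δ : S.Ext X A) (δ' : S.Ext X' A') :
    S.Ext (X ⊞ X') (A ⊞ A') :=
  S.push biprod.inl (S.pull biprod.fst δ) + S.push biprod.inr (S.pull biprod.snd δ')

/-- The axioms of an extriangulated category (Nakaoka–Palu): `E` is biadditive,
`s` (encoded by `IsExtriangle`) is an additive realisation defined on equivalence
classes, and the axioms (ET3), (ET3)ᵒᵖ, (ET4), (ET4)ᵒᵖ hold. -/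
structure IsET : Prop where
  /-- Biadditivity of `E` in the covariant variable. -/
  push_add : ∀ {X A A' : C} (a b : A ⟶ A') (δ : S.Ext X A),
      S.push (a + b) δ = S.push a δ + S.push b δ
  /-- Biadditivity of `E` in the contravariant variable. -/
  pull_add : ∀ {X X' A : C} (c d : X' ⟶ X) (δ : S.Ext X A),
      S.pull (c + d) δ = S.pull c δ + S.pull d δ
  /-- Every extension is realised by a pair of composable morphisms. -/
  realize_exists : ∀ {A X : C} (δ : S.Ext X A),
      ∃ (B : C) (f : A ⟶ B) (g : B ⟶ X), S.IsExtriangle f g δ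
  /-- The realisation is closed under equivalence of pairs of composable morphisms. -/
  realize_iso : ∀ {A B B' X : C} {f : A ⟶ B} {g : B ⟶ X} {δ : S.Ext X A} (e : B ≅ B'),
      S.IsExtriangle f g δ → S.IsExtriangle (f ≫ e.hom) (e.inv ≫ g) δ
  /-- Any two realisations of the same extension are equivalent. -/
  realize_unique : ∀ {A B B' X : C} {f : A ⟶ B} {g : B ⟶ X} {f' : A ⟶ B'} {g' : B' ⟶ X}
      {δ : S.Ext X A}, S.IsExtriangle f g δ → S.IsExtriangle f' g' δ →
      ∃ e : B ≅ B', f ≫ e.hom = f' ∧ e.hom ≫ g' = g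
  /-- Morphisms of extensions lift to morphisms of extriangles. -/
  realize_map : ∀ {A B X A' B' X' : C} {f : A ⟶ B} {g : B ⟶ X} {δ : S.Ext X A}
      {f' : A' ⟶ B'} {g' : B' ⟶ X'} {δ' : S.Ext X' A'},
      S.IsExtriangle f g δ → S.IsExtriangle f' g' δ' →
      ∀ (a : A ⟶ A') (c : X ⟶ X'), S.push a δ = S.pull c δ' →
      ∃ b : B ⟶ B', f ≫ b = a ≫ f' ∧ b ≫ g' = g ≫ c
  /-- The zero extension is realised by the split pair. -/
  realize_zero : ∀ (A X : C),
      S.IsExtriangle (biprod.inl : A ⟶ A ⊞ X) (biprod.snd : A ⊞ X ⟶ X) (0 : S.Ext X A)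
  /-- The realisation is additive. -/
  realize_sum : ∀ {A B X A' B' X' : C} {f : A ⟶ B} {g : B ⟶ X} {δ : S.Ext X A}
      {f' : A' ⟶ B'} {g' : B' ⟶ X'} {δ' : S.Ext X' A'},
      S.IsExtriangle f g δ → S.IsExtriangle f' g' δ' →
      S.IsExtriangle (biprod.map f f') (biprod.map g g') (S.sumExt δ δ')
  /-- Axiom (ET3). -/
  et3 : ∀ {A B X A' B' X' : C} {f : A ⟶ B} {g : B ⟶ X} {δ : S.Ext X A}
      {f' : A' ⟶ B'} {g' : B' ⟶ X'} {δ' : S.Ext X' A'},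
      S.IsExtriangle f g δ → S.IsExtriangle f' g' δ' →
      ∀ (a : A ⟶ A') (b : B ⟶ B'), f ≫ b = a ≫ f' →
      ∃ c : X ⟶ X', g ≫ c = b ≫ g' ∧ S.push a δ = S.pull c δ'
  /-- Axiom (ET3)ᵒᵖ. -/
  et3op : ∀ {A B X A' B' X' : C} {f : A ⟶ B} {g : B ⟶ X} {δ : S.Ext X A}
      {f' : A' ⟶ B'} {g' : B' ⟶ X'} {δ' : S.Ext X' A'},
      S.IsExtriangle f g δ → S.IsExtriangle f' g' δ' →
      ∀ (b : B ⟶ B') (c : X ⟶ X'), g ≫ c = b ≫ g' →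
      ∃ a : A ⟶ A', f ≫ b = a ≫ f' ∧ S.push a δ = S.pull c δ'
  /-- Axiom (ET4). -/
  et4 : ∀ {A B D F G : C} {f : A ⟶ B} {f' : B ⟶ D} {δ : S.Ext D A}
      {g : B ⟶ G} {g' : G ⟶ F} {δ' : S.Ext F B},
      S.IsExtriangle f f' δ → S.IsExtriangle g g' δ' →
      ∃ (E₀ : C) (h : G ⟶ E₀) (d : D ⟶ E₀) (e : E₀ ⟶ F) (δ'' : S.Ext E₀ A),
        S.IsExtriangle (f ≫ g) h δ'' ∧
        S.IsExtriangle d e (S.push f' δ') ∧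
        S.pull d δ'' = δ ∧
        S.push f δ'' = S.pull e δ' ∧
        f' ≫ d = g ≫ h ∧ h ≫ e = g'
  /-- Axiom (ET4)ᵒᵖ. -/
  et4op : ∀ {D B A F G : C} {p : D ⟶ B} {f₁ : B ⟶ A} {δ₁ : S.Ext A D}
      {q : F ⟶ G} {g₁ : G ⟶ B} {δ₁' : S.Ext B F},
      S.IsExtriangle p f₁ δ₁ → S.IsExtriangle q g₁ δ₁' →
      ∃ (E₀ : C) (h : E₀ ⟶ G) (d : E₀ ⟶ D) (e : F ⟶ E₀) (δ'' : S.Ext A E₀),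
        S.IsExtriangle h (g₁ ≫ f₁) δ'' ∧
        S.IsExtriangle e d (S.pull p δ₁') ∧
        S.push d δ'' = δ₁ ∧
        S.pull f₁ δ'' = S.push e δ₁' ∧
        d ≫ p = h ≫ g₁ ∧ e ≫ h = q

end Axioms

/-- A morphism is an inflation if it occurs as the first morphism of an extriangle. -/
def IsInflation {A B : C} (f : A ⟶ B) : Prop :=
  ∃ (X : C) (g : B ⟶ X) (δ : S.Ext X A), S.IsExtriangle f g δ

/-- A morphism is a deflation if it occurs as the second morphism of an extriangle. -/
def IsDeflation {B X : C} (g : B ⟶ X) : Prop :=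
  ∃ (A : C) (f : A ⟶ B) (δ : S.Ext X A), S.IsExtriangle f g δ

/-- An isomorphism of extriangles: a triple of isomorphisms compatible with the
structure morphisms and identifying the two extensions. -/
def TriIso {A B X A' B' X' : C} (f : A ⟶ B) (g : B ⟶ X) (δ : S.Ext X A)
    (f' : A' ⟶ B') (g' : B' ⟶ X') (δ' : S.Ext X' A') : Prop :=
  ∃ (iA : A ≅ A') (iB : B ≅ B') (iX : X ≅ X'),
    f ≫ iB.hom = iA.hom ≫ f' ∧ g ≫ iX.hom = iB.hom ≫ g' ∧
    S.push iA.hom δ = S.pull iX.hom δ'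

/-- A chain of `t` composable extriangles: inflations `obj i ⟶ obj (i+1)` each fitting
in an extriangle with cone `factor i`.  This underlies filtrations, inflation series
and composition series alike. -/
structure FChain (t : ℕ) where
  obj : Fin (t + 1) → C
  factor : Fin t → C
  f : ∀ i : Fin t, obj i.castSucc ⟶ obj i.succ
  g : ∀ i : Fin t, obj i.succ ⟶ factor i
  δ : ∀ i : Fin t, S.Ext (factor i) (obj i.castSucc)
  ext : ∀ i : Fin t, S.IsExtriangle (f i) (g i) (δ i)

/-- The composite `obj 0 ⟶ obj i` of the morphisms of a chain. -/
def FChain.comp {t : ℕ} (c : S.FChain t) : ∀ i : Fin (t + 1), c.obj 0 ⟶ c.obj i :=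
  Fin.induction (𝟙 _) (fun i ih => ih ≫ c.f i)

/-- The subcategory `F(P)` of objects admitting a filtration with factors in `P`. -/
def Filt (P : Set C) : Set C :=
  {M | ∃ (t : ℕ) (c : S.FChain t), IsZero (c.obj 0) ∧ c.obj (Fin.last t) = M ∧
      ∀ i, c.factor i ∈ P}

/-- An `(E, s)`-simple object: a non-zero object `M` such that in every extriangle
`A →a M → X ⇢` the inflation `a` is zero or an isomorphism. -/
def SSimple (M : C) : Prop :=
  ¬ IsZero M ∧ ∀ (A X : C) (a : A ⟶ M) (g : M ⟶ X) (δ : S.Ext X A),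
    S.IsExtriangle a g δ → a = 0 ∨ IsIso a

/-- The zero objects of `C` are `(E, s)`-simple-like. -/
def ZeroSimpleLike : Prop :=
  ∀ (A Z X : C) (f : A ⟶ Z) (g : Z ⟶ X) (δ : S.Ext X A),
    IsZero Z → S.IsExtriangle f g δ → IsZero A

/-- `c` is an `(E, s)`-composition series of `M`. -/
def IsCompSeries {t : ℕ} (c : S.FChain t) (M : C) : Prop :=
  IsZero (c.obj 0) ∧ c.obj (Fin.last t) = M ∧ ∀ i, S.SSimple (c.factor i)

/-- `(A, E, s)` is a length extriangulated category. -/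
def LengthCat : Prop :=
  ∀ M : C, (∃ (t : ℕ) (c : S.FChain t), S.IsCompSeries c M) ∧
    ∃ N : ℕ, ∀ (t : ℕ) (c : S.FChain t), S.IsCompSeries c M → t ≤ N

/-- `(A, E, s)` is a Jordan–Hölder extriangulated category: any two composition series
of an object have the same length and, up to a permutation, isomorphic simple factors. -/
def JordanHolder : Prop :=
  ∀ (M : C) (t t' : ℕ) (c : S.FChain t) (c' : S.FChain t'),
    S.IsCompSeries c M → S.IsCompSeries c' M →
    ∃ e : Fin t ≃ Fin t', ∀ i, Nonempty (c.factor i ≅ c'.factor (e i))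

/-- `c` is an `(E, s)`-inflation series of `B`: a filtration of `B` with non-zero factors. -/
def IsInflSeries {t : ℕ} (c : S.FChain t) (B : C) : Prop :=
  IsZero (c.obj 0) ∧ c.obj (Fin.last t) = B ∧ ∀ i, ¬ IsZero (c.factor i)

/-- `X` and `Y` admit isomorphic `(E, s)`-inflation series. -/
def HaveIsoInflSeries (X Y : C) : Prop :=
  ∃ (t : ℕ) (c d : S.FChain t), S.IsInflSeries c X ∧ S.IsInflSeries d Y ∧
    ∃ e : Equiv.Perm (Fin t), ∀ i, Nonempty (c.factor i ≅ d.factor (e i))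

/-- Simplicity of `M` with respect to the extriangulated structure restricted to the
extension-closed subcategory `𝒮`: extriangles of the restricted structure are exactly
the ambient extriangles all of whose terms lie in `𝒮`. -/
def SimpleIn (𝒮 : Set C) (M : C) : Prop :=
  M ∈ 𝒮 ∧ ¬ IsZero M ∧ ∀ (A X : C) (a : A ⟶ M) (g : M ⟶ X) (δ : S.Ext X A),
    A ∈ 𝒮 → X ∈ 𝒮 → S.IsExtriangle a g δ → a = 0 ∨ IsIso a

/-- `c` is a composition series of `M` in the extriangulated structure restricted to `𝒮`. -/
def IsCompSeriesIn (𝒮 : Set C) {t : ℕ} (c : S.FChain t) (M : C) : Prop :=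
  IsZero (c.obj 0) ∧ c.obj (Fin.last t) = M ∧ (∀ i, c.obj i ∈ 𝒮) ∧
    ∀ i, S.SimpleIn 𝒮 (c.factor i)

section Star

variable [HasZeroObject C] [HasFiniteBiproducts C]

/-- The subcategory `P ∗ Q` of objects `Z` admitting an extriangle `X → Z → Y ⇢`
with `X ∈ P` and `Y ∈ Q`. -/
def star (P Q : Set C) : Set C :=
  {Z | ∃ (X Y : C) (f : X ⟶ Z) (g : Z ⟶ Y) (δ : S.Ext Y X),
      X ∈ P ∧ Y ∈ Q ∧ S.IsExtriangle f g δ}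

/-- Iterated `∗` of a list of subcategories (the empty `∗` being the zero objects). -/
def starMany : List (Set C) → Set C
  | [] => {Z | IsZero Z}
  | P :: l => S.star P (starMany l)

end Star

/-- The relative projectives `P(P) = {Z : E(Z, Y) = 0 for all Y ∈ F(P)}`. -/
def projSet (P : Set C) : Set C :=
  {Z | ∀ Y ∈ S.Filt P, ∀ δ : S.Ext Z Y, δ = 0}

/-- `Hom(W, −)` is left exact on the extriangulated structure restricted to `𝒮`:
for every extriangle `A →a B → X ⇢` with all terms in `𝒮`, composition with `a`
is injective on morphisms from `W`. -/
def HomLeftExactOn (W : C) (𝒮 : Set C) : Prop :=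
  ∀ (A B X : C) (a : A ⟶ B) (g : B ⟶ X) (δ : S.Ext X A),
    A ∈ 𝒮 → B ∈ 𝒮 → X ∈ 𝒮 → S.IsExtriangle a g δ →
    ∀ φ ψ : W ⟶ A, φ ≫ a = ψ ≫ a → φ = ψ

/-- The subset of the free abelian group on objects consisting of the defining
relations of the Grothendieck group `K₀(A, E, s)`. -/
def K0Rels : Set (FreeAbelianGroup C) :=
  {x | ∃ (A B X : C) (f : A ⟶ B) (g : B ⟶ X) (δ : S.Ext X A), S.IsExtriangle f g δ ∧
      x = FreeAbelianGroup.of A + FreeAbelianGroup.of X - FreeAbelianGroup.of B} ∪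
  {x | ∃ (X Y : C) (_ : X ≅ Y), x = FreeAbelianGroup.of X - FreeAbelianGroup.of Y}

/-- `[M] = [M']` in the Grothendieck group `K₀(A, E, s)`, the quotient of the free
abelian group on (isomorphism classes of) objects by the extriangle relations. -/
def GrpRel (M M' : C) : Prop :=
  FreeAbelianGroup.of M - FreeAbelianGroup.of M' ∈ AddSubgroup.closure S.K0Rels

end PreExt

/-- The congruence defining the Grothendieck monoid: `MonRel S M M'` holds if and only
if `[M] = [M']` in the Grothendieck monoid `M(A, E, s)`, the quotient of the monoid of
isomorphism classes of objects (under `⊞`) by the congruence generated by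
`[B] ∼ [A] + [X]` for each extriangle `A → B → X ⇢`. -/
inductive MonRel {C : Type u} [Category.{v} C] [Preadditive C] [HasZeroObject C]
    [HasFiniteBiproducts C] (S : PreExt C) : C → C → Prop
  | of {A B X : C} {f : A ⟶ B} {g : B ⟶ X} {δ : S.Ext X A}
      (h : S.IsExtriangle f g δ) : MonRel S B (A ⊞ X)
  | iso {X Y : C} (e : X ≅ Y) : MonRel S X Y
  | symm {X Y : C} : MonRel S X Y → MonRel S Y X
  | trans {X Y Z : C} : MonRel S X Y → MonRel S Y Z → MonRel S X Z
  | add {X Y : C} (Z : C) : MonRel S X Y → MonRel S (X ⊞ Z) (Y ⊞ Z)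

/-- `[M]` is an atom of the Grothendieck monoid `M(A, E, s)`. -/
def IsAtomClass {C : Type u} [Category.{v} C] [Preadditive C] [HasZeroObject C]
    [HasFiniteBiproducts C] (S : PreExt C) (M : C) : Prop :=
  ¬ MonRel S M 0 ∧ ∀ X Y : C, MonRel S M (X ⊞ Y) → MonRel S X 0 ∨ MonRel S Y 0

/-- An additive category is weakly idempotent complete if every retraction admits a kernel. -/
def WeaklyIdemComplete (C : Type u) [Category.{v} C] [Preadditive C] : Prop :=
  ∀ (X Y : C) (r : X ⟶ Y), IsSplitEpi r → HasKernel r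

/-- A set of objects is closed under direct summands. -/
def ClosedSummands {C : Type u} [Category.{v} C] [Preadditive C] [HasZeroObject C]
    [HasFiniteBiproducts C] (P : Set C) : Prop :=
  ∀ (X Y Z : C), Z ∈ P → Nonempty (Z ≅ X ⊞ Y) → X ∈ P

/-- A Krull–Schmidt category: every object is a finite biproduct of objects having
local endomorphism rings. -/
def KrullSchmidtCat (C : Type u) [Category.{v} C] [Preadditive C] [HasZeroObject C]
    [HasFiniteBiproducts C] : Prop :=
  ∀ X : C, ∃ (n : ℕ) (Y : Fin n → C),
    (∀ i, IsLocalRing (End (Y i))) ∧ Nonempty (X ≅ ⨁ Y)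

/-- The closure `add Ψ` of a set of objects under finite direct sums and isomorphisms. -/
def addSet {C : Type u} [Category.{v} C] [Preadditive C] [HasZeroObject C]
    [HasFiniteBiproducts C] (P : Set C) : Set C :=
  {X | ∃ (m : ℕ) (f : Fin m → C), (∀ k, f k ∈ P) ∧ Nonempty (X ≅ ⨁ f)}

/-- An indecomposable object. -/
def Indec {C : Type u} [Category.{v} C] [Preadditive C] [HasZeroObject C]
    [HasFiniteBiproducts C] (X : C) : Prop :=
  ¬ IsZero X ∧ ∀ (Y Z : C), Nonempty (X ≅ Y ⊞ Z) → IsZero Y ∨ IsZero Z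

/-- A morphism `q` is right minimal. -/
def RightMinimal {C : Type u} [Category.{v} C] {X Y : C} (q : X ⟶ Y) : Prop :=
  ∀ g : X ⟶ X, g ≫ q = q → IsIso g

/-- The extra structure making an extriangulated category into an artin `R`-linear
extriangulated category: an `R`-module structure on each `E(X, A)` for which `E` is
`R`-bilinear, with all Hom-sets and all `E(X, A)` of finite length over `R`. -/
structure ArtinLinear {C : Type u} [Category.{v} C] [Preadditive C]
    (R : Type*) [CommRing R] [CategoryTheory.Linear R C] (S : PreExt C) where
  module : ∀ X A : C, Module R (S.Ext X A)
  push_smul : ∀ {X A A' : C} (r : R) (a : A ⟶ A') (δ : S.Ext X A),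
      S.push (r • a) δ = letI := module X A'; r • S.push a δ
  pull_smul : ∀ {X' X A : C} (r : R) (c : X' ⟶ X) (δ : S.Ext X A),
      S.pull (r • c) δ = letI := module X' A; r • S.pull c δ
  homFinite : ∀ X Y : C, IsFiniteLength R (X ⟶ Y)
  extFinite : ∀ X A : C, letI := module X A; IsFiniteLength R (S.Ext X A)

/-- An `E`-stratifying system: a finite family of indecomposable objects subject to
the orthogonality axioms (S1) and (S2). -/
structure IsStratSys {C : Type u} [Category.{v} C] [Preadditive C] [HasZeroObject C]
    [HasFiniteBiproducts C] (S : PreExt C) {n : ℕ} (Φ : Fin n → C) : Prop where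
  indec : ∀ i, Indec (Φ i)
  s1 : ∀ i j : Fin n, i < j → ∀ φ : Φ j ⟶ Φ i, φ = 0
  s2 : ∀ i j : Fin n, i ≤ j → ∀ δ : S.Ext (Φ j) (Φ i), δ = 0

/-- The data of extriangles `K i → Q i → Φ i ⇢η i` with `K i ∈ F(Φ_{j>i})`, as in
axiom (PS2) of a projective `E`-stratifying system. -/
structure ProjData {C : Type u} [Category.{v} C] [Preadditive C]
    (S : PreExt C) {n : ℕ} (Φ Q : Fin n → C) where
  K : Fin n → C
  k : ∀ i, K i ⟶ Q i
  q : ∀ i, Q i ⟶ Φ i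
  η : ∀ i, S.Ext (Φ i) (K i)
  ext : ∀ i, S.IsExtriangle (k i) (q i) (η i)
  kmem : ∀ i, K i ∈ S.Filt (Φ '' {j | i < j})

/-- `(Φ, Q)` is a projective `E`-stratifying system. -/
def IsProjSS {C : Type u} [Category.{v} C] [Preadditive C] [HasZeroObject C]
    [HasFiniteBiproducts C] (S : PreExt C) {n : ℕ} (Φ Q : Fin n → C) : Prop :=
  IsStratSys S Φ ∧ (∀ i j : Fin n, ∀ δ : S.Ext (Q i) (Φ j), δ = 0) ∧
    Nonempty (ProjData S Φ Q)

/-- `(Φ, Q)` is a minimal projective `E`-stratifying system: the morphisms `q i` of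
the extriangles witnessing (PS2) may be chosen right minimal. -/
def IsMinProjSS {C : Type u} [Category.{v} C] [Preadditive C] [HasZeroObject C]
    [HasFiniteBiproducts C] (S : PreExt C) {n : ℕ} (Φ Q : Fin n → C) : Prop :=
  IsStratSys S Φ ∧ (∀ i j : Fin n, ∀ δ : S.Ext (Q i) (Φ j), δ = 0) ∧
    ∃ d : ProjData S Φ Q, ∀ i, RightMinimal (d.q i)

/-!
An extriangle whose inflation is a section, or whose deflation is a retraction, has zero
extension (because `f_* δ = 0` and `g^* δ = 0` for every extriangle `A →f B →g X ⇢δ`), so it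
is isomorphic to the split extriangle `A → A ⊞ X → X`. Hence a retraction is a deflation exactly
when it is a biproduct projection up to isomorphism, i.e. when it has a kernel; and shears of
`A ⊞ X` carry sections to `biprod.inr` and retractions to `biprod.fst`, so (ii) ⟺ (iii).

Given (ii) and (iii), let `f ≫ g` be a deflation with `f : A ⟶ B`. A shear shows that
`biprod.snd ≫ g` is a deflation with some fibre `x : K ⟶ A ⊞ B`; `biprod.inl` factors as
`z ≫ x` with `z` a section, hence an inflation. (ET4) for `z` and `x` gives an extriangle
`A → A ⊞ B → E` with zero extension, so `B ≅ E`, together with an extriangle ending in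
`E ⟶ D`, which is `g` up to this isomorphism. The inflation half of (WIC) is dual, via (ET4)ᵒᵖ;
conversely (WIC) gives (ii) because identities are deflations.
-/

section Biprod

variable {C : Type u} [Category.{v} C] [Preadditive C] [HasBinaryBiproducts C]

theorem isIso_inr_comp_hom_comp_snd {A B E : C} (ψ : A ⊞ B ≅ A ⊞ E)
    (h : biprod.inl ≫ ψ.hom = biprod.inl) :
    IsIso (biprod.inr ≫ ψ.hom ≫ biprod.snd : B ⟶ E) := by
  have h' : biprod.inl ≫ ψ.inv = biprod.inl := by
    rw [← h, Category.assoc, Iso.hom_inv_id, Category.comp_id]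
  have total {X : C} :
      (biprod.snd ≫ biprod.inr : A ⊞ X ⟶ A ⊞ X) = 𝟙 _ - biprod.fst ≫ biprod.inl :=
    eq_sub_of_add_eq' biprod.total
  refine ⟨biprod.inr ≫ ψ.inv ≫ biprod.snd, ?_, ?_⟩
  · simp [reassoc_of% total, reassoc_of% h']
  · simp [reassoc_of% total, reassoc_of% h]

theorem isIso_inl_comp_hom_comp_fst {B E X : C} (ψ : B ⊞ X ≅ E ⊞ X)
    (h : ψ.hom ≫ biprod.snd = biprod.snd) :
    IsIso (biprod.inl ≫ ψ.hom ≫ biprod.fst : B ⟶ E) := by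
  have h' : ψ.inv ≫ biprod.snd = biprod.snd := by
    rw [← h, ← Category.assoc, Iso.inv_hom_id, Category.id_comp]
  have total {A : C} :
      (biprod.fst ≫ biprod.inl : A ⊞ X ⟶ A ⊞ X) = 𝟙 _ - biprod.snd ≫ biprod.inr :=
    eq_sub_of_add_eq biprod.total
  refine ⟨biprod.inl ≫ ψ.inv ≫ biprod.fst, ?_, ?_⟩
  · simp [reassoc_of% total, reassoc_of% h]
  · simp [reassoc_of% total, reassoc_of% h']

end Biprod

namespace PreExt

variable {C : Type u} [Category.{v} C] [Preadditive C] (S : PreExt C)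

@[simp]
theorem push_id {X A : C} (δ : S.Ext X A) : S.push (𝟙 A) δ = δ := by
  simp [push]

@[simp]
theorem pull_id {X A : C} (δ : S.Ext X A) : S.pull (𝟙 X) δ = δ := by
  simp [pull]

theorem push_comp {X A A' A'' : C} (a : A ⟶ A') (b : A' ⟶ A'') (δ : S.Ext X A) :
    S.push (a ≫ b) δ = S.push b (S.push a δ) := by
  simp [push]

theorem pull_comp {X X' X'' A : C} (c : X' ⟶ X) (d : X'' ⟶ X') (δ : S.Ext X A) :
    S.pull (d ≫ c) δ = S.pull d (S.pull c δ) := by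
  simp [pull]

@[simp]
theorem push_zero {X A A' : C} (a : A ⟶ A') : S.push a (0 : S.Ext X A) = 0 :=
  map_zero _

@[simp]
theorem pull_zero {X' X A : C} (c : X' ⟶ X) : S.pull c (0 : S.Ext X A) = 0 :=
  map_zero _

def RetractionsAreDeflations : Prop :=
  ∀ ⦃X Y : C⦄ (r : X ⟶ Y), IsSplitEpi r → S.IsDeflation r

def SectionsAreInflations : Prop :=
  ∀ ⦃X Y : C⦄ (s : X ⟶ Y), IsSplitMono s → S.IsInflation s

namespace IsET

variable [HasFiniteBiproducts C] {S}

theorem isExtriangle_id_zero [HasZeroObject C] (hS : S.IsET) (A : C) :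
    S.IsExtriangle (𝟙 A) (0 : A ⟶ 0) 0 := by
  simpa [(isZero_zero C).eq_of_tgt]
    using hS.realize_iso (isoBiprodZero (isZero_zero C)).symm (hS.realize_zero A 0)

theorem isExtriangle_zero_id [HasZeroObject C] (hS : S.IsET) (X : C) :
    S.IsExtriangle (0 : 0 ⟶ X) (𝟙 X) 0 := by
  simpa [(isZero_zero C).eq_of_src]
    using hS.realize_iso (isoZeroBiprod (isZero_zero C)).symm (hS.realize_zero 0 X)

theorem isExtriangle_inr_fst (hS : S.IsET) (A X : C) :
    S.IsExtriangle (biprod.inr : A ⟶ X ⊞ A) biprod.fst 0 := by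
  have h := hS.realize_iso (biprod.braiding A X) (hS.realize_zero A X)
  rwa [show biprod.inl ≫ (biprod.braiding A X).hom = biprod.inr by ext <;> simp,
    show (biprod.braiding A X).inv ≫ biprod.snd = biprod.fst by simp] at h

section Extriangle

variable {A B X : C} {f : A ⟶ B} {g : B ⟶ X} {δ : S.Ext X A}

theorem push_eq_zero (hS : S.IsET) (h : S.IsExtriangle f g δ) : S.push f δ = 0 := by
  obtain ⟨a, ha, hδ⟩ :=
    hS.et3op h (hS.realize_zero B X) (biprod.lift (𝟙 B) g) (𝟙 X) (by simp)
  obtain rfl : f = a := by simpa using congrArg (· ≫ biprod.fst) ha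
  simpa using hδ

theorem pull_eq_zero (hS : S.IsET) (h : S.IsExtriangle f g δ) : S.pull g δ = 0 := by
  obtain ⟨c, hc, hδ⟩ :=
    hS.et3 (hS.realize_zero A B) h (𝟙 A) (biprod.desc f (𝟙 B)) (by simp)
  obtain rfl : c = g := by simpa using congrArg (biprod.inr ≫ ·) hc
  simpa using hδ.symm

theorem eq_zero_of_isSplitMono (hS : S.IsET) (h : S.IsExtriangle f g δ) [IsSplitMono f] :
    δ = 0 := by
  simpa [← push_comp] using congrArg (S.push (retraction f)) (hS.push_eq_zero h)

theorem eq_zero_of_isSplitEpi (hS : S.IsET) (h : S.IsExtriangle f g δ) [IsSplitEpi g] :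
    δ = 0 := by
  simpa [← pull_comp] using congrArg (S.pull (section_ g)) (hS.pull_eq_zero h)

theorem exists_iso_biprod_of_isSplitMono (hS : S.IsET) (h : S.IsExtriangle f g δ)
    [IsSplitMono f] : ∃ w : B ≅ A ⊞ X, f ≫ w.hom = biprod.inl ∧ w.hom ≫ biprod.snd = g := by
  rw [hS.eq_zero_of_isSplitMono h] at h
  exact hS.realize_unique h (hS.realize_zero A X)

theorem exists_iso_biprod_of_isSplitEpi (hS : S.IsET) (h : S.IsExtriangle f g δ)
    [IsSplitEpi g] : ∃ w : B ≅ A ⊞ X, f ≫ w.hom = biprod.inl ∧ w.hom ≫ biprod.snd = g := by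
  rw [hS.eq_zero_of_isSplitEpi h] at h
  exact hS.realize_unique h (hS.realize_zero A X)

theorem exists_lift_of_comp_eq_zero [HasZeroObject C] (hS : S.IsET)
    (h : S.IsExtriangle f g δ) {T : C} (t : T ⟶ B) (ht : t ≫ g = 0) :
    ∃ z : T ⟶ A, z ≫ f = t := by
  obtain ⟨z, hz, -⟩ := hS.et3op (hS.isExtriangle_id_zero T) h t 0 (by simp [ht])
  exact ⟨z, by simpa using hz.symm⟩

theorem exists_desc_of_comp_eq_zero [HasZeroObject C] (hS : S.IsET)
    (h : S.IsExtriangle f g δ) {T : C} (t : B ⟶ T) (ht : f ≫ t = 0) :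
    ∃ c : X ⟶ T, g ≫ c = t := by
  obtain ⟨c, hc, -⟩ := hS.et3 h (hS.isExtriangle_zero_id T) 0 t (by simp [ht])
  exact ⟨c, by simpa using hc⟩

end Extriangle

theorem isInflation_comp (hS : S.IsET) {A B G : C} {f : A ⟶ B} {g : B ⟶ G}
    (hf : S.IsInflation f) (hg : S.IsInflation g) : S.IsInflation (f ≫ g) := by
  obtain ⟨_, _, _, hf⟩ := hf
  obtain ⟨_, _, _, hg⟩ := hg
  obtain ⟨_, _, -, -, _, h, -⟩ := hS.et4 hf hg
  exact ⟨_, _, _, h⟩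

theorem isDeflation_comp (hS : S.IsET) {G B A : C} {g : G ⟶ B} {f : B ⟶ A}
    (hg : S.IsDeflation g) (hf : S.IsDeflation f) : S.IsDeflation (g ≫ f) := by
  obtain ⟨_, _, _, hg⟩ := hg
  obtain ⟨_, _, _, hf⟩ := hf
  obtain ⟨_, _, -, -, _, h, -⟩ := hS.et4op hf hg
  exact ⟨_, _, _, h⟩

theorem isInflation_comp_isIso (hS : S.IsET) {A B B' : C} {f : A ⟶ B}
    (hf : S.IsInflation f) (e : B ⟶ B') [IsIso e] : S.IsInflation (f ≫ e) := by
  obtain ⟨_, _, _, h⟩ := hf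
  exact ⟨_, _, _, hS.realize_iso (asIso e) h⟩

theorem isDeflation_isIso_comp (hS : S.IsET) {B' B X : C} (e : B' ⟶ B) [IsIso e] {g : B ⟶ X}
    (hg : S.IsDeflation g) : S.IsDeflation (e ≫ g) := by
  obtain ⟨_, _, _, h⟩ := hg
  exact ⟨_, _, _, hS.realize_iso (asIso e).symm h⟩

theorem isInflation_inr (hS : S.IsET) (A X : C) : S.IsInflation (biprod.inr : A ⟶ X ⊞ A) :=
  ⟨_, _, _, hS.isExtriangle_inr_fst A X⟩

theorem isDeflation_fst (hS : S.IsET) (X A : C) : S.IsDeflation (biprod.fst : X ⊞ A ⟶ X) :=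
  ⟨_, _, _, hS.isExtriangle_inr_fst A X⟩

theorem isInflation_biprod_map_id [HasZeroObject C] (hS : S.IsET) {A X : C} {i : A ⟶ X}
    (hi : S.IsInflation i) (K : C) : S.IsInflation (biprod.map (𝟙 K) i) := by
  obtain ⟨_, _, _, h⟩ := hi
  exact ⟨_, _, _, hS.realize_sum (hS.isExtriangle_id_zero K) h⟩

theorem isDeflation_biprod_map_id [HasZeroObject C] (hS : S.IsET) {A D : C} {d : A ⟶ D}
    (hd : S.IsDeflation d) (Q : C) : S.IsDeflation (biprod.map d (𝟙 Q)) := by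
  obtain ⟨_, _, _, h⟩ := hd
  exact ⟨_, _, _, hS.realize_sum h (hS.isExtriangle_zero_id Q)⟩

theorem isDeflation_of_hasKernel (hS : S.IsET) {X Y : C} (r : X ⟶ Y) [IsSplitEpi r]
    [HasKernel r] : S.IsDeflation r := by
  let e := biprod.uniqueUpToIso _ _ (isBilimitBinaryBiconeOfIsSplitEpiOfKernel (kernelIsKernel r))
  have he : e.symm.inv ≫ biprod.snd = r := biprod.lift_snd _ _
  exact ⟨_, _, _, he ▸ hS.realize_iso e.symm (hS.realize_zero (kernel r) Y)⟩

theorem hasKernel_of_isDeflation (hS : S.IsET) {X Y : C} {r : X ⟶ Y} [IsSplitEpi r]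
    (hr : S.IsDeflation r) : HasKernel r := by
  obtain ⟨_, _, _, h⟩ := hr
  obtain ⟨w, -, hw⟩ := hS.exists_iso_biprod_of_isSplitEpi h
  rw [← hw]
  infer_instance

theorem sectionsAreInflations (hS : S.IsET) (h2 : S.RetractionsAreDeflations) :
    S.SectionsAreInflations := by
  intro X Y s _
  obtain ⟨K, _, _, h⟩ := h2 (retraction s) inferInstance
  obtain ⟨w, -, hw⟩ := hS.exists_iso_biprod_of_isSplitEpi h
  have hs : s = biprod.inr ≫ (Biprod.unipotentLower (s ≫ w.hom ≫ biprod.fst)).hom ≫ w.inv := by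
    rw [← cancel_mono w.hom]
    ext <;> simp [hw]
  rw [hs]
  exact hS.isInflation_comp_isIso (hS.isInflation_inr X K) _

theorem retractionsAreDeflations (hS : S.IsET) (h3 : S.SectionsAreInflations) :
    S.RetractionsAreDeflations := by
  intro X Y r _
  obtain ⟨Q, _, _, h⟩ := h3 (section_ r) inferInstance
  obtain ⟨w, hw, -⟩ := hS.exists_iso_biprod_of_isSplitMono h
  have hw' : biprod.inl ≫ w.inv = section_ r := by simp [← hw]
  have hr : r = w.hom ≫ (Biprod.unipotentLower (biprod.inr ≫ w.inv ≫ r)).hom ≫ biprod.fst := by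
    rw [← cancel_epi w.inv]
    ext <;> simp [reassoc_of% hw']
  rw [hr, ← Category.assoc]
  exact hS.isDeflation_isIso_comp _ (hS.isDeflation_fst Y Q)

variable [HasZeroObject C]

theorem isDeflation_biprod_desc (hS : S.IsET) (h2 : S.RetractionsAreDeflations) {A D : C}
    {d : A ⟶ D} (hd : S.IsDeflation d) {Q : C} (t : Q ⟶ D) :
    S.IsDeflation (biprod.desc d t) := by
  have : IsSplitEpi (biprod.desc (𝟙 D) t) := IsSplitEpi.mk' ⟨biprod.inl, by simp⟩
  have hdt : biprod.map d (𝟙 Q) ≫ biprod.desc (𝟙 D) t = biprod.desc d t := by ext <;> simp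
  exact hdt ▸ hS.isDeflation_comp (hS.isDeflation_biprod_map_id hd Q) (h2 _ this)

theorem isInflation_biprod_lift (hS : S.IsET) (h3 : S.SectionsAreInflations) {A X : C}
    {i : A ⟶ X} (hi : S.IsInflation i) {K : C} (t : A ⟶ K) :
    S.IsInflation (biprod.lift t i) := by
  have : IsSplitMono (biprod.lift t (𝟙 A)) := IsSplitMono.mk' ⟨biprod.snd, by simp⟩
  have hti : biprod.lift t (𝟙 A) ≫ biprod.map (𝟙 K) i = biprod.lift t i := by ext <;> simp
  exact hti ▸ hS.isInflation_comp (h3 _ this) (hS.isInflation_biprod_map_id hi K)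

theorem isDeflation_snd_comp (hS : S.IsET) (h2 : S.RetractionsAreDeflations) {A B D : C}
    {f : A ⟶ B} {g : B ⟶ D} (h : S.IsDeflation (f ≫ g)) :
    S.IsDeflation (biprod.snd ≫ g : A ⊞ B ⟶ D) := by
  have hg : (biprod.snd ≫ g : A ⊞ B ⟶ D) =
      (Biprod.unipotentUpper f).inv ≫ biprod.desc (f ≫ g) g := by
    ext <;> simp [Biprod.ofComponents]
  rw [hg]
  exact hS.isDeflation_isIso_comp _ (hS.isDeflation_biprod_desc h2 h g)

theorem isInflation_comp_inl (hS : S.IsET) (h3 : S.SectionsAreInflations) {A B X : C}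
    {f : A ⟶ B} {g : B ⟶ X} (h : S.IsInflation (f ≫ g)) :
    S.IsInflation (f ≫ biprod.inl : A ⟶ B ⊞ X) := by
  have hf : (f ≫ biprod.inl : A ⟶ B ⊞ X) =
      biprod.lift f (f ≫ g) ≫ (Biprod.unipotentUpper g).inv := by
    ext <;> simp [Biprod.ofComponents]
  rw [hf]
  exact hS.isInflation_comp_isIso (hS.isInflation_biprod_lift h3 h f) _

theorem isDeflation_of_isDeflation_snd_comp (hS : S.IsET) (h3 : S.SectionsAreInflations)
    {A B D : C} {g : B ⟶ D} (h : S.IsDeflation (biprod.snd ≫ g : A ⊞ B ⟶ D)) :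
    S.IsDeflation g := by
  obtain ⟨_, x, _, hx⟩ := h
  obtain ⟨z, hz⟩ := hS.exists_lift_of_comp_eq_zero hx biprod.inl (by simp)
  have : IsSplitMono z := IsSplitMono.mk' ⟨x ≫ biprod.fst, by simp [reassoc_of% hz]⟩
  obtain ⟨_, _, _, hz'⟩ := h3 z this
  obtain ⟨_, _, _, e, _, H1, H2, -, -, -, he⟩ := hS.et4 hz' hx
  rw [hz] at H1
  obtain ⟨ψ, hψ, hψ'⟩ := hS.exists_iso_biprod_of_isSplitMono H1
  have := isIso_inr_comp_hom_comp_snd ψ hψ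
  have hg : g = (biprod.inr ≫ ψ.hom ≫ biprod.snd) ≫ e := by
    simp [reassoc_of% hψ', he]
  rw [hg]
  exact hS.isDeflation_isIso_comp _ ⟨_, _, _, H2⟩

theorem isInflation_of_isInflation_comp_inl (hS : S.IsET) (h2 : S.RetractionsAreDeflations)
    {A B X : C} {f : A ⟶ B} (h : S.IsInflation (f ≫ biprod.inl : A ⟶ B ⊞ X)) :
    S.IsInflation f := by
  obtain ⟨_, y, _, hy⟩ := h
  obtain ⟨c, hc⟩ := hS.exists_desc_of_comp_eq_zero hy biprod.snd (by simp)
  have : IsSplitEpi c := IsSplitEpi.mk' ⟨biprod.inr ≫ y, by simp [hc]⟩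
  obtain ⟨_, _, _, hm⟩ := h2 c this
  obtain ⟨_, _, _, e, _, H1, H2, -, -, -, he⟩ := hS.et4op hm hy
  rw [hc] at H1
  obtain ⟨ψ, hψ, hψ'⟩ := hS.exists_iso_biprod_of_isSplitEpi H1
  have := isIso_inl_comp_hom_comp_fst ψ hψ'
  have hf : f = e ≫ inv (biprod.inl ≫ ψ.hom ≫ biprod.fst) := by
    rw [IsIso.eq_comp_inv, ← Category.assoc, ← he]
    simp [reassoc_of% hψ]
  rw [hf]
  exact hS.isInflation_comp_isIso ⟨_, _, _, H2⟩ _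

end IsET

end PreExt

section Statements

variable {C : Type u} [Category.{v} C] [Preadditive C] [HasZeroObject C] [HasFiniteBiproducts C]

/-- characterisations of weak idempotent completeness. -/
theorem stmt0 (S : PreExt C) (hS : S.IsET) :
    List.TFAE
      [WeaklyIdemComplete C,
       ∀ (X Y : C) (r : X ⟶ Y), IsSplitEpi r → S.IsDeflation r,
       ∀ (X Y : C) (s : X ⟶ Y), IsSplitMono s → S.IsInflation s,
       (∀ (A B X : C) (f : A ⟶ B) (g : B ⟶ X), S.IsInflation (f ≫ g) → S.IsInflation f) ∧
         (∀ (A B X : C) (f : A ⟶ B) (g : B ⟶ X), S.IsDeflation (f ≫ g) → S.IsDeflation g)] := by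
  tfae_have 1 → 2 := fun h1 X Y r hr =>
    have := h1 X Y r hr
    hS.isDeflation_of_hasKernel r
  tfae_have 2 → 1 := fun h2 X Y r hr => hS.hasKernel_of_isDeflation (h2 X Y r hr)
  tfae_have 2 → 3 := hS.sectionsAreInflations
  tfae_have 3 → 2 := hS.retractionsAreDeflations
  tfae_have 2 → 4 := fun h2 =>
    have h3 := hS.sectionsAreInflations h2
    ⟨fun _ _ _ _ _ h => hS.isInflation_of_isInflation_comp_inl h2 (hS.isInflation_comp_inl h3 h),
      fun _ _ _ _ _ h => hS.isDeflation_of_isDeflation_snd_comp h3 (hS.isDeflation_snd_comp h2 h)⟩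
  tfae_have 4 → 2 := fun h4 X Y r hr =>
    h4.2 Y X Y (section_ r) r ((IsSplitEpi.id r).symm ▸ ⟨_, _, _, hS.isExtriangle_zero_id Y⟩)
  tfae_finish

end Statements

end ExtriPaper
end

section
/- Let (A, E, s) be an extriangulated category. If (A, E, s) has an (E, s)-simple object S, then the zero object of A is (E, s)-simple-like. -/
/-!
Common axiomatic framework: extriangulated categories in the sense of Nakaoka–Palu,
formalised as a biadditive functor `E` together with a realisation predicate
`IsExtriangle` subject to the axioms (ET1)–(ET4), (ET3)ᵒᵖ, (ET4)ᵒᵖ.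
-/

open CategoryTheory CategoryTheory.Limits ZeroObject

attribute [local instance] CategoryTheory.Limits.hasBinaryBiproducts_of_finite_biproducts

universe v u

namespace ExtriPaper

section Biproducts

variable {C : Type u} [Category.{v} C] [HasZeroMorphisms C]

theorem isZero_of_mono_biprod_desc_zero {A M N : C} [HasBinaryBiproduct A M] (g : M ⟶ N)
    [Mono (biprod.desc (0 : A ⟶ N) g)] : IsZero A :=
  IsZero.of_mono_eq_zero biprod.inl <| (cancel_mono (biprod.desc (0 : A ⟶ N) g)).mp (by simp)

theorem isZero_of_biprod_desc_zero_id_eq_zero {A M : C} [HasBinaryBiproduct A M]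
    (h : biprod.desc (0 : A ⟶ M) (𝟙 M) = 0) : IsZero M := by
  rw [IsZero.iff_id_eq_zero, ← biprod.inr_desc (0 : A ⟶ M) (𝟙 M), h, comp_zero]

end Biproducts

section Statements

variable {C : Type u} [Category.{v} C] [Preadditive C] [HasZeroObject C] [HasFiniteBiproducts C]

/-- Adding the split extriangle `M → M ⊞ 0 → 0` to an extriangle with zero middle term gives
one whose middle term is `M`. -/
theorem PreExt.IsET.exists_isExtriangle_biprod_desc_zero_id {S : PreExt C} (hS : S.IsET)
    {A Z X : C} {f : A ⟶ Z} {g : Z ⟶ X} {δ : S.Ext X A} (hZ : IsZero Z)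
    (h : S.IsExtriangle f g δ) (M : C) :
    ∃ (Y : C) (g' : M ⟶ Y) (δ' : S.Ext Y (A ⊞ M)),
      S.IsExtriangle (biprod.desc 0 (𝟙 M)) g' δ' := by
  let e : Z ⊞ (M ⊞ (0 : C)) ≅ M := (isoBiprodZero (isZero_zero C) ≪≫ isoZeroBiprod hZ).symm
  have hinfl : biprod.map f biprod.inl ≫ e.hom = biprod.desc 0 (𝟙 M) := by
    ext <;> simp [e]
  exact ⟨_, _, _, hinfl ▸ hS.realize_iso e (hS.realize_sum h (hS.realize_zero M 0))⟩

theorem stmt4 (S : PreExt C) (hS : S.IsET) (hsimple : ∃ M : C, S.SSimple M) :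
    S.ZeroSimpleLike := by
  obtain ⟨M, hMnonzero, hMsimple⟩ := hsimple
  intro A Z X f g δ hZ h
  obtain ⟨Y, g', δ', h'⟩ := hS.exists_isExtriangle_biprod_desc_zero_id hZ h M
  rcases hMsimple _ _ _ _ _ h' with hzero | hiso
  · exact absurd (isZero_of_biprod_desc_zero_id_eq_zero hzero) hMnonzero
  · exact isZero_of_mono_biprod_desc_zero (𝟙 M)

end Statements

end ExtriPaper
end
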